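/- arXiv:2201.00811 — 2 statements merged into one kernel-verified Lean document; each statement's English description precedes it below -/
import Mathlib

section
/- Let A, B : ℕ → ℕ satisfy A(1) = 56, B(1) = 124, and for all n ≥ 1: A(2n) = 4·A(n), A(2n+1) = A(n) + A(n+1) + 2·B(n), B(2n) = 2·A(n) + 2·B(n), B(2n+1) = 2·A(n+1) + 2·B(n). Then for all n ≥ 1, A(n) = 32n² + 72n·2^⌊log₂ n⌋ − 48·(2^⌊log₂ n⌋)². -/
/-!
Write `p = 2 ^ ⌊log₂ n⌋`. Both `A n` and `B n` are quadratic forms in `(n, p)`: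
`A n = 32 n² + 72 n p - 48 p²` and `B n = A n + 32 n + 36 p`. Passing from `m` to `2m` or
`2m + 1` doubles `p`, and the recurrences become polynomial identities. The only subtlety is the
term `A (m + 1)`, whose `p` may be twice that of `m`; this happens only when `m + 1` is itself a
power of two, and there the two readings of the quadratic form agree.
-/

namespace Robinson

def quadA (n p : ℤ) : ℤ := 32 * n ^ 2 + 72 * n * p - 48 * p ^ 2

def quadB (n p : ℤ) : ℤ := quadA n p + 32 * n + 36 * p

lemma quadA_self_two_mul (p : ℤ) : quadA (2 * p) (2 * p) = quadA (2 * p) p := by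
  unfold quadA; ring

def closedA (n : ℕ) : ℤ := quadA n (2 ^ Nat.log 2 n)

def closedB (n : ℕ) : ℤ := quadB n (2 ^ Nat.log 2 n)

lemma log_two_succ_eq_or (m : ℕ) :
    Nat.log 2 (m + 1) = Nat.log 2 m ∨ m + 1 = 2 ^ (Nat.log 2 m + 1) := by
  have hlt : m < 2 ^ (Nat.log 2 m + 1) := Nat.lt_pow_succ_log_self one_lt_two m
  rcases (Nat.succ_le_of_lt hlt).lt_or_eq with hlt' | heq
  · have hge : Nat.log 2 m ≤ Nat.log 2 (m + 1) := Nat.log_mono_right m.le_succ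
    have hle : Nat.log 2 (m + 1) < Nat.log 2 m + 1 := Nat.log_lt_of_lt_pow m.succ_ne_zero hlt'
    exact Or.inl (by omega)
  · exact Or.inr heq

lemma closedA_succ (m : ℕ) : closedA (m + 1) = quadA ((m + 1 : ℕ) : ℤ) (2 ^ Nat.log 2 m) := by
  rcases log_two_succ_eq_or m with hlog | hpow
  · rw [closedA, hlog]
  · have hlog : Nat.log 2 (m + 1) = Nat.log 2 m + 1 := by rw [hpow, Nat.log_pow one_lt_two]
    have hcast : ((m + 1 : ℕ) : ℤ) = 2 * 2 ^ Nat.log 2 m := by rw [hpow]; push_cast; ring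
    rw [closedA, hlog, hcast, pow_succ', quadA_self_two_mul]

lemma log_two_two_mul {m : ℕ} (hm : m ≠ 0) : Nat.log 2 (2 * m) = Nat.log 2 m + 1 := by
  rw [mul_comm, Nat.log_mul_base one_lt_two hm]

lemma log_two_two_mul_add_one {m : ℕ} (hm : m ≠ 0) :
    Nat.log 2 (2 * m + 1) = Nat.log 2 m + 1 := by
  rw [Nat.log_of_one_lt_of_le one_lt_two (by omega)]
  congr 2
  omega

lemma closedA_two_mul {m : ℕ} (hm : m ≠ 0) : closedA (2 * m) = 4 * closedA m := by
  simp only [closedA, quadA, log_two_two_mul hm]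
  push_cast
  ring

lemma closedB_two_mul {m : ℕ} (hm : m ≠ 0) :
    closedB (2 * m) = 2 * closedA m + 2 * closedB m := by
  simp only [closedA, closedB, quadB, quadA, log_two_two_mul hm]
  push_cast
  ring

lemma closedA_two_mul_add_one {m : ℕ} (hm : m ≠ 0) :
    closedA (2 * m + 1) = closedA m + closedA (m + 1) + 2 * closedB m := by
  rw [closedA_succ m]
  simp only [closedA, closedB, quadB, quadA, log_two_two_mul_add_one hm]
  push_cast
  ring

lemma closedB_two_mul_add_one {m : ℕ} (hm : m ≠ 0) :
    closedB (2 * m + 1) = 2 * closedA (m + 1) + 2 * closedB m := by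
  rw [closedA_succ m]
  simp only [closedB, quadB, quadA, log_two_two_mul_add_one hm]
  push_cast
  ring

theorem eq_closedA_and_eq_closedB (A B : ℕ → ℤ) (hA1 : A 1 = 56) (hB1 : B 1 = 124)
    (hA2 : ∀ n ≥ 1, A (2 * n) = 4 * A n)
    (hA3 : ∀ n ≥ 1, A (2 * n + 1) = A n + A (n + 1) + 2 * B n)
    (hB2 : ∀ n ≥ 1, B (2 * n) = 2 * A n + 2 * B n)
    (hB3 : ∀ n ≥ 1, B (2 * n + 1) = 2 * A (n + 1) + 2 * B n) :
    ∀ n ≥ 1, A n = closedA n ∧ B n = closedB n := by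
  intro n hn
  induction n using Nat.strong_induction_on with
  | _ n ih =>
  obtain ⟨m, rfl | rfl⟩ := Nat.even_or_odd' n
  · have hm : m ≠ 0 := by omega
    obtain ⟨ihA, ihB⟩ := ih m (by omega) (by omega)
    rw [hA2 m (by omega), hB2 m (by omega), ihA, ihB, closedA_two_mul hm, closedB_two_mul hm]
    exact ⟨rfl, rfl⟩
  · rcases eq_or_ne m 0 with rfl | hm
    · exact ⟨hA1, hB1⟩
    obtain ⟨ihA, ihB⟩ := ih m (by omega) (by omega)
    obtain ⟨ihA', -⟩ := ih (m + 1) (by omega) (by omega)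
    rw [hA3 m (by omega), hB3 m (by omega), ihA, ihB, ihA', closedA_two_mul_add_one hm,
      closedB_two_mul_add_one hm]
    exact ⟨rfl, rfl⟩

end Robinson

theorem robinson_complexity
    (A B : ℕ → ℕ)
    (hA1 : A 1 = 56) (hB1 : B 1 = 124)
    (hA2 : ∀ n ≥ 1, A (2 * n) = 4 * A n)
    (hA3 : ∀ n ≥ 1, A (2 * n + 1) = A n + A (n + 1) + 2 * B n)
    (hB2 : ∀ n ≥ 1, B (2 * n) = 2 * A n + 2 * B n)
    (hB3 : ∀ n ≥ 1, B (2 * n + 1) = 2 * A (n + 1) + 2 * B n) :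
    ∀ n ≥ 1, (A n : ℤ) =
      32 * (n : ℤ) ^ 2 + 72 * (n : ℤ) * (2 ^ Nat.log 2 n : ℤ)
        - 48 * ((2 ^ Nat.log 2 n : ℤ)) ^ 2 := by
  intro n hn
  have hcast := Robinson.eq_closedA_and_eq_closedB (fun n ↦ A n) (fun n ↦ B n)
    (by simp [hA1]) (by simp [hB1])
    (fun n hn ↦ by simp [hA2 n hn]) (fun n hn ↦ by simp [hA3 n hn])
    (fun n hn ↦ by simp [hB2 n hn]) (fun n hn ↦ by simp [hB3 n hn])
  exact (hcast n hn).1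
end

section
/- Let A, B : ℕ → ℤ satisfy A(1) = 56, B(1) = 124, A(2n) = 4·A(n), A(2n+1) = A(n) + A(n+1) + 2·B(n), B(2n) = 2·A(n) + 2·B(n), B(2n+1) = 2·A(n+1) + 2·B(n) for n ≥ 1. Then for all n ≥ 1, A(n) = a(n)·56 + b(n)·124, where a(n) = 5n² − 12n·2^⌊log₂ n⌋ + 8·(2^⌊log₂ n⌋)² and b(n) = −2n² + 6n·2^⌊log₂ n⌋ − 4·(2^⌊log₂ n⌋)². -/
def robA (n : ℕ) : ℤ :=
  5 * (n : ℤ) ^ 2 - 12 * (n : ℤ) * 2 ^ Nat.log 2 n + 8 * (2 ^ Nat.log 2 n : ℤ) ^ 2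

def robB (n : ℕ) : ℤ :=
  -2 * (n : ℤ) ^ 2 + 6 * (n : ℤ) * 2 ^ Nat.log 2 n - 4 * (2 ^ Nat.log 2 n : ℤ) ^ 2

private def G (n : ℕ) : ℤ :=
  32 * (n : ℤ) ^ 2 + 72 * (n : ℤ) * 2 ^ Nat.log 2 n - 48 * (2 ^ Nat.log 2 n : ℤ) ^ 2

private lemma log_two_mul (m : ℕ) (hm : 1 ≤ m) :
    Nat.log 2 (2 * m) = Nat.log 2 m + 1 := by
  rw [mul_comm]
  exact Nat.log_mul_base one_lt_two (by omega)

private lemma log_two_mul_succ (m : ℕ) (hm : 1 ≤ m) :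
    Nat.log 2 (2 * m + 1) = Nat.log 2 m + 1 := by
  have h1 : 2 ^ Nat.log 2 m ≤ m := Nat.pow_log_le_self 2 (by omega)
  have h2 : m < 2 ^ (Nat.log 2 m + 1) := Nat.lt_pow_succ_log_self one_lt_two m
  refine Nat.log_eq_of_pow_le_of_lt_pow ?_ ?_
  · rw [pow_succ]; omega
  · have : 2 ^ (Nat.log 2 m + 1 + 1) = 2 ^ (Nat.log 2 m + 1) * 2 := pow_succ 2 _
    rw [this, pow_succ] at *
    omega

private lemma G_succ (m : ℕ) (hm : 1 ≤ m) :
    G (m + 1) = 32 * ((m : ℤ) + 1) ^ 2 + 72 * ((m : ℤ) + 1) * 2 ^ Nat.log 2 m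
      - 48 * ((2 : ℤ) ^ Nat.log 2 m) ^ 2 := by
  have h1 : 2 ^ Nat.log 2 m ≤ m := Nat.pow_log_le_self 2 (by omega)
  have h2 : m < 2 ^ (Nat.log 2 m + 1) := Nat.lt_pow_succ_log_self one_lt_two m
  by_cases h : m + 1 < 2 ^ (Nat.log 2 m + 1)
  · have hl : Nat.log 2 (m + 1) = Nat.log 2 m :=
      Nat.log_eq_of_pow_le_of_lt_pow (by omega) h
    simp only [G, hl]
    push_cast
    ring
  · have h : m + 1 = 2 ^ (Nat.log 2 m + 1) := by omega
    have hl : Nat.log 2 (m + 1) = Nat.log 2 m + 1 := by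
      rw [h, Nat.log_pow one_lt_two]
    have hm1 : ((m : ℤ) + 1) = 2 * 2 ^ Nat.log 2 m := by
      have : ((m + 1 : ℕ) : ℤ) = ((2 ^ (Nat.log 2 m + 1) : ℕ) : ℤ) := by rw [h]
      push_cast [pow_succ] at this
      -- cast already pushed
      linarith
    simp only [G, hl]
    push_cast [pow_succ]
    rw [show ((m : ℤ) + 1) = 2 * 2 ^ Nat.log 2 m from hm1]
    ring

private lemma aux (A B : ℕ → ℤ)
    (hA1 : A 1 = 56) (hB1 : B 1 = 124)
    (hA2 : ∀ n ≥ 1, A (2 * n) = 4 * A n)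
    (hA3 : ∀ n ≥ 1, A (2 * n + 1) = A n + A (n + 1) + 2 * B n)
    (hB2 : ∀ n ≥ 1, B (2 * n) = 2 * A n + 2 * B n)
    (hB3 : ∀ n ≥ 1, B (2 * n + 1) = 2 * A (n + 1) + 2 * B n) :
    ∀ n, 1 ≤ n → A n = G n ∧ B n = G n + 32 * n + 36 * 2 ^ Nat.log 2 n := by
  intro n
  induction n using Nat.strong_induction_on with
  | _ n ih =>
    intro hn
    rcases Nat.even_or_odd n with he | ho
    · obtain ⟨m, rfl⟩ := he
      rw [← two_mul] at *
      have hm : 1 ≤ m := by omega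
      obtain ⟨ihA, ihB⟩ := ih m (by omega) hm
      have hlog := log_two_mul m hm
      constructor
      · rw [hA2 m hm, ihA]
        simp only [G, hlog]
        push_cast [pow_succ]
        ring
      · rw [hB2 m hm, ihA, ihB]
        simp only [G, hlog]
        push_cast [pow_succ]
        ring
    · obtain ⟨m, rfl⟩ := ho
      rcases Nat.eq_zero_or_pos m with rfl | hm
      · norm_num
        constructor
        · rw [hA1]; simp [G]
        · rw [hB1]; simp [G]
      obtain ⟨ihA, ihB⟩ := ih m (by omega) hm
      obtain ⟨ihA1, _⟩ := ih (m + 1) (by omega) (by omega)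
      have hlog := log_two_mul_succ m hm
      have hG1 := G_succ m hm
      constructor
      · rw [hA3 m hm, ihA, ihB, ihA1, hG1]
        simp only [G, hlog]
        push_cast [pow_succ]
        ring
      · rw [hB3 m hm, ihA1, ihB, hG1]
        simp only [G, hlog]
        push_cast [pow_succ]
        ring

theorem robinson_A_decomposition
    (A B : ℕ → ℤ)
    (hA1 : A 1 = 56) (hB1 : B 1 = 124)
    (hA2 : ∀ n ≥ 1, A (2 * n) = 4 * A n)
    (hA3 : ∀ n ≥ 1, A (2 * n + 1) = A n + A (n + 1) + 2 * B n)
    (hB2 : ∀ n ≥ 1, B (2 * n) = 2 * A n + 2 * B n)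
    (hB3 : ∀ n ≥ 1, B (2 * n + 1) = 2 * A (n + 1) + 2 * B n) :
    ∀ n ≥ 1, A n = robA n * 56 + robB n * 124 := by
  intro n hn
  have h := (aux A B hA1 hB1 hA2 hA3 hB2 hB3 n hn).1
  rw [h]
  simp only [G, robA, robB]
  ring
end
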